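/- arXiv:2312.06200 — 5 statements merged into one kernel-verified Lean document; each statement's English description precedes it below -/
import Mathlib

section
/- For all x, y ∈ [0,1], the function l(x,y) = min over (a,b) ∈ T(x,y) of (log₂ e / 8)·((1-x)²a² + (1-y)²b²), where T(x,y) = {a,b ≥ 0 : a ≥ (4y-2)⁺, b ≥ (4x-2)⁺, a+b ≥ 2-x-y}, satisfies l(x,y) ≥ (log₂ e / 256)·(2-x-y)². -/
/-- For all `x, y ∈ [0,1]`, the function
`l(x,y) = min over (a,b) ∈ T(x,y) of (log₂ e / 8)·((1-x)²a² + (1-y)²b²)`, where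
`T(x,y) = {a,b ≥ 0 : a ≥ (4y-2)⁺, b ≥ (4x-2)⁺, a+b ≥ 2-x-y}`, satisfies
`l(x,y) ≥ (log₂ e / 256)·(2-x-y)²`.  Since the minimum is attained on the nonempty
closed set `T(x,y)`, this is equivalent to the pointwise inequality stated here. -/
theorem l_lower_bound (x y : ℝ) (hx : x ∈ Set.Icc (0:ℝ) 1) (hy : y ∈ Set.Icc (0:ℝ) 1)
    (a b : ℝ) (ha0 : 0 ≤ a) (hb0 : 0 ≤ b)
    (ha : max (4 * y - 2) 0 ≤ a) (hb : max (4 * x - 2) 0 ≤ b)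
    (hab : 2 - x - y ≤ a + b) :
    Real.logb 2 (Real.exp 1) / 256 * (2 - x - y) ^ 2
      ≤ Real.logb 2 (Real.exp 1) / 8 * ((1 - x) ^ 2 * a ^ 2 + (1 - y) ^ 2 * b ^ 2) := by
  obtain ⟨hx0, hx1⟩ := hx
  obtain ⟨hy0, hy1⟩ := hy
  have ha' : 4 * y - 2 ≤ a := le_trans (le_max_left _ _) ha
  have hb' : 4 * x - 2 ≤ b := le_trans (le_max_left _ _) hb
  have hu : (0:ℝ) ≤ 1 - x := by linarith
  have hv : (0:ℝ) ≤ 1 - y := by linarith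
  have hL : 0 < Real.logb 2 (Real.exp 1) := by
    have := Real.exp_one_gt_d9
    exact Real.logb_pos (by norm_num) (by linarith)
  have hP : (2 - x - y) / 4 ≤ (1 - x) * a + (1 - y) * b := by
    rcases le_or_gt x (3/4) with h1 | h1 <;> rcases le_or_gt y (3/4) with h2 | h2
    · nlinarith [mul_nonneg (by linarith : (0:ℝ) ≤ 3/4 - x) ha0,
        mul_nonneg (by linarith : (0:ℝ) ≤ 3/4 - y) hb0]
    · nlinarith [mul_nonneg hu (by linarith : (0:ℝ) ≤ a - (4*y-2)),
        mul_nonneg hv hb0, mul_nonneg hu (by linarith : (0:ℝ) ≤ 4*y - 3)]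
    · nlinarith [mul_nonneg hv (by linarith : (0:ℝ) ≤ b - (4*x-2)),
        mul_nonneg hu ha0, mul_nonneg hv (by linarith : (0:ℝ) ≤ 4*x - 3)]
    · nlinarith [mul_nonneg hu (by linarith : (0:ℝ) ≤ a - (4*y-2)),
        mul_nonneg hv (by linarith : (0:ℝ) ≤ b - (4*x-2)),
        mul_nonneg hu (by linarith : (0:ℝ) ≤ 4*y - 3),
        mul_nonneg hv (by linarith : (0:ℝ) ≤ 4*x - 3)]
  have key : (2 - x - y) ^ 2 ≤ 32 * ((1 - x) ^ 2 * a ^ 2 + (1 - y) ^ 2 * b ^ 2) := by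
    nlinarith [sq_nonneg ((1 - x) * a - (1 - y) * b), sq_nonneg (2 - x - y),
      mul_nonneg (mul_nonneg hu ha0) (mul_nonneg hv hb0),
      mul_self_nonneg ((1-x)*a + (1-y)*b - (2-x-y)/4),
      mul_nonneg (by linarith : (0:ℝ) ≤ 2 - x - y) (by linarith : (0:ℝ) ≤ (1-x)*a + (1-y)*b - (2-x-y)/4)]
  nlinarith [mul_le_mul_of_nonneg_left key hL.le]
end

section
/- Let p₁, q₁ ∈ [1/2, 1) and define λ = p₁q₁ / (p₁q₁ + (1-p₁)(1-q₁)). Then λ ≥ 1/2 and h₂(λ) ≤ -4(1-p₁)(1-q₁) log₂((1-p₁)(1-q₁)). -/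
/-!
Put `b = (1-p₁)(1-q₁) ≤ 1/4` and `s = p₁q₁ + b ∈ [1/2, 1]`, so that `λ = 1 - b/s` and
`h₂(λ) = h₂(b/s)`. In nats, `-(b/s) log(b/s) ≤ -(b log b)/s ≤ -2 b log b` because `log s ≤ 0`,
and `-(1 - b/s) log(1 - b/s) ≤ b/s ≤ 2b ≤ -2 b log b` because `b ≤ 1/4 < e⁻¹`.
-/

/-- The binary entropy function (base 2). -/
noncomputable def binEnt (x : ℝ) : ℝ :=
  -(x * Real.logb 2 x) - (1 - x) * Real.logb 2 (1 - x)

open Real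

lemma binEnt_eq_binEntropy_div_log_two (x : ℝ) : binEnt x = binEntropy x / log 2 := by
  rw [binEnt, binEntropy_eq_negMulLog_add_negMulLog_one_sub, negMulLog, negMulLog, logb, logb]
  ring

lemma negMulLog_div_le {b s : ℝ} (hb : 0 ≤ b) (hs : 0 < s) (hs1 : s ≤ 1) :
    negMulLog (b / s) ≤ negMulLog b / s := by
  have hinv : negMulLog s⁻¹ ≤ 0 :=
    (negMulLog_le_one_sub_self (by positivity)).trans (by linarith [(one_le_inv₀ hs).2 hs1])
  rw [div_eq_mul_inv, negMulLog_mul, div_eq_inv_mul]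
  nlinarith [mul_nonpos_of_nonneg_of_nonpos hb hinv]

lemma self_le_negMulLog {b : ℝ} (hb : 0 ≤ b) (hbe : b ≤ exp (-1)) : b ≤ negMulLog b := by
  rcases hb.eq_or_lt with rfl | hb
  · simp
  have hlog : log b ≤ -1 := (log_le_iff_le_exp hb).2 hbe
  rw [negMulLog]
  nlinarith

lemma quarter_le_exp_neg_one : (1 / 4 : ℝ) ≤ exp (-1) := by
  rw [exp_neg, one_div]
  exact inv_anti₀ (exp_pos 1) (exp_one_lt_d9.trans (by norm_num)).le

lemma binEntropy_div_le {b s : ℝ} (hb : 0 ≤ b) (hb4 : b ≤ 1 / 4) (hs : 1 / 2 ≤ s)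
    (hs1 : s ≤ 1) : binEntropy (b / s) ≤ 4 * negMulLog b := by
  have hs0 : 0 < s := by linarith
  have hbs : b / s ≤ 2 * b := by rw [div_le_iff₀ hs0]; nlinarith
  have hnml : 0 ≤ negMulLog b := negMulLog_nonneg hb (by linarith)
  have hdiv : negMulLog b / s ≤ 2 * negMulLog b := by rw [div_le_iff₀ hs0]; nlinarith
  have hcompl : negMulLog (1 - b / s) ≤ b / s := by
    simpa using negMulLog_le_one_sub_self (x := 1 - b / s) (by linarith)
  have hself : b ≤ negMulLog b := self_le_negMulLog hb (hb4.trans quarter_le_exp_neg_one)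
  rw [binEntropy_eq_negMulLog_add_negMulLog_one_sub]
  linarith [negMulLog_div_le hb hs0 hs1]

/-- Let `p₁, q₁ ∈ [1/2, 1)` and `λ = p₁q₁ / (p₁q₁ + (1-p₁)(1-q₁))`. Then `λ ≥ 1/2` and
`h₂(λ) ≤ -4(1-p₁)(1-q₁) log₂((1-p₁)(1-q₁))`. -/
theorem binEnt_lambda_bound (p₁ q₁ : ℝ) (hp : p₁ ∈ Set.Ico (1/2 : ℝ) 1)
    (hq : q₁ ∈ Set.Ico (1/2 : ℝ) 1) :
    1/2 ≤ p₁ * q₁ / (p₁ * q₁ + (1 - p₁) * (1 - q₁)) ∧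
      binEnt (p₁ * q₁ / (p₁ * q₁ + (1 - p₁) * (1 - q₁)))
        ≤ -(4 * ((1 - p₁) * (1 - q₁)) * Real.logb 2 ((1 - p₁) * (1 - q₁))) := by
  obtain ⟨hp1, hp2⟩ := hp
  obtain ⟨hq1, hq2⟩ := hq
  set b := (1 - p₁) * (1 - q₁)
  set s := p₁ * q₁ + b
  have hb : 0 ≤ b := mul_nonneg (by linarith) (by linarith)
  have hb4 : b ≤ 1 / 4 := by nlinarith
  have hs : 1 / 2 ≤ s := by nlinarith
  have hs1 : s ≤ 1 := by nlinarith
  have hlam : p₁ * q₁ / s = 1 - b / s := by field_simp; ring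
  have hbs : b / s ≤ 1 / 2 := by rw [div_le_iff₀ (by linarith)]; nlinarith
  refine ⟨by rw [hlam]; linarith, ?_⟩
  rw [hlam, binEnt_eq_binEntropy_div_log_two, binEntropy_one_sub]
  calc binEntropy (b / s) / log 2 ≤ 4 * negMulLog b / log 2 :=
        div_le_div_of_nonneg_right (binEntropy_div_le hb hb4 hs hs1) (log_nonneg one_le_two)
    _ = -(4 * b * logb 2 b) := by rw [negMulLog, logb]; ring
end

section
/- Let X₁, X₂ be independent continuous random variables with finite Fisher information, λ ∈ [0,1], and set Y₁ = λX₁ + √(1-λ²)X₂, Y₂ = √(1-λ²)X₁ - λX₂. Then the conditional Fisher information J(Y₂|Y₁) := E_{y∼Y₁}[J(⟨Y₂|Y₁=y⟩)] equals (1-λ²)J(X₁) + λ²J(X₂). -/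
open MeasureTheory

/-- Fisher information of a (differentiable) probability density `φ` on `ℝ`:
`J(φ) = ∫ φ'(x)² / φ(x) dx`. -/
noncomputable def fisherInfo (φ : ℝ → ℝ) : ℝ :=
  ∫ x, (deriv φ x) ^ 2 / φ x

/-!
Write `a = λ`, `b = √(1-λ²)` and `p(u, v) = φ₁(u) φ₂(v)`. The map `R(y, t) = (ay + bt, by - at)`
is a reflection of the plane, and the unnormalised conditional density at `y` is `t ↦ p(R(y, t))`.
Multiplying the Fisher information of the normalised slice by its mass gives
`∫ (∂_t p∘R)² / p∘R dt`, and `∂_t (p∘R) = (∂_{(b,-a)} p)∘R`. Integrating over `y` and undoing the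
area-preserving `R` leaves `∫ (∂_{(b,-a)} p)² / p` over the plane, which factorises into
`b² J(φ₁) + a² J(φ₂)`: the cross term is `-2ab (∫ φ₁')(∫ φ₂') = 0`.
-/

section Density

variable {φ : ℝ → ℝ}

lemma deriv_eq_zero_of_nonneg_of_eq_zero (hnn : ∀ x, 0 ≤ φ x) {x : ℝ} (hx : φ x = 0) :
    deriv φ x = 0 :=
  IsLocalMin.deriv_eq_zero (.of_forall fun y => hx ▸ hnn y)

lemma abs_deriv_le_of_nonneg (hnn : ∀ x, 0 ≤ φ x) (x : ℝ) :
    |deriv φ x| ≤ ((deriv φ x) ^ 2 / φ x + φ x) / 2 := by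
  rcases (hnn x).eq_or_lt with hx | hx
  · rw [← hx, deriv_eq_zero_of_nonneg_of_eq_zero hnn hx.symm]
    simp
  · have hsq : (deriv φ x) ^ 2 = (deriv φ x) ^ 2 / φ x * φ x := by field_simp
    have hJ : 0 ≤ (deriv φ x) ^ 2 / φ x := by positivity
    rcases abs_cases (deriv φ x) with ⟨h, _⟩ | ⟨h, _⟩ <;> rw [h] <;>
      nlinarith [sq_nonneg ((deriv φ x) ^ 2 / φ x - φ x)]

lemma integrable_deriv_of_integrable_fisher (hnn : ∀ x, 0 ≤ φ x) (hφ : Integrable φ)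
    (hfin : Integrable fun x => (deriv φ x) ^ 2 / φ x) : Integrable (deriv φ) :=
  ((hfin.add hφ).div_const 2).mono' (measurable_deriv φ).aestronglyMeasurable
    (.of_forall fun x => abs_deriv_le_of_nonneg hnn x)

/-- When `∫ φ = 0` the normalisation divides by zero, but then `φ = 0` a.e. and both sides
vanish. -/
lemma integral_mul_fisherInfo_div_integral (hnn : ∀ x, 0 ≤ φ x) (hφ : Integrable φ) :
    (∫ x, φ x) * fisherInfo (fun x => φ x / ∫ s, φ s) = ∫ x, (deriv φ x) ^ 2 / φ x := by
  set Z := ∫ s, φ s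
  rcases eq_or_ne Z 0 with hZ | hZ
  · have hae : φ =ᵐ[volume] 0 := (integral_eq_zero_iff_of_nonneg hnn hφ).1 hZ
    rw [hZ, zero_mul, integral_eq_zero_of_ae]
    filter_upwards [hae] with x hx
    simp [show φ x = 0 from hx]
  · rw [fisherInfo, ← integral_const_mul]
    refine integral_congr_ae (.of_forall fun x => ?_)
    simp only [deriv_div_const]
    rcases eq_or_ne (φ x) 0 with hx | hx
    · simp [hx]
    · field_simp

end Density

section Reflection

noncomputable def reflection (a b : ℝ) : ℝ × ℝ →ₗ[ℝ] ℝ × ℝ :=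
  (a • LinearMap.fst ℝ ℝ ℝ + b • LinearMap.snd ℝ ℝ ℝ).prod
    (b • LinearMap.fst ℝ ℝ ℝ - a • LinearMap.snd ℝ ℝ ℝ)

@[simp]
lemma reflection_apply (a b : ℝ) (p : ℝ × ℝ) :
    reflection a b p = (a * p.1 + b * p.2, b * p.1 - a * p.2) := rfl

variable {a b : ℝ} {E : Type*} [NormedAddCommGroup E]

lemma reflection_involutive (hab : a ^ 2 + b ^ 2 = 1) :
    Function.Involutive (reflection a b) := fun p => by
  ext
  · simp only [reflection_apply]; linear_combination p.1 * hab
  · simp only [reflection_apply]; linear_combination p.2 * hab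

lemma abs_det_reflection (hab : a ^ 2 + b ^ 2 = 1) : |LinearMap.det (reflection a b)| = 1 := by
  have hsq : LinearMap.det (reflection a b) * LinearMap.det (reflection a b) = 1 := by
    rw [← LinearMap.det_comp, show (reflection a b).comp (reflection a b) = .id from
      LinearMap.ext (reflection_involutive hab), LinearMap.det_id]
  rcases mul_self_eq_one_iff.1 hsq with h | h <;> simp [h]

lemma measurePreserving_reflection (hab : a ^ 2 + b ^ 2 = 1) :
    MeasurePreserving (reflection a b) := by
  have hdet : LinearMap.det (reflection a b) ≠ 0 := by
    rw [← abs_ne_zero, abs_det_reflection hab]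
    exact one_ne_zero
  refine ⟨(reflection a b).continuous_of_finiteDimensional.measurable, ?_⟩
  rw [Measure.map_linearMap_addHaar_eq_smul_addHaar volume hdet, abs_inv, abs_det_reflection hab]
  simp

noncomputable def reflectionEquiv (hab : a ^ 2 + b ^ 2 = 1) : ℝ × ℝ ≃ᵐ ℝ × ℝ :=
  .ofInvolutive _ (reflection_involutive hab)
    (reflection a b).continuous_of_finiteDimensional.measurable

lemma integral_comp_reflection [NormedSpace ℝ E] (hab : a ^ 2 + b ^ 2 = 1) (F : ℝ × ℝ → E) :
    ∫ p, F (reflection a b p) = ∫ p, F p :=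
  (measurePreserving_reflection hab).integral_comp' (f := reflectionEquiv hab) F

lemma integrable_comp_reflection (hab : a ^ 2 + b ^ 2 = 1) {F : ℝ × ℝ → E}
    (hF : Integrable F) : Integrable (fun p => F (reflection a b p)) :=
  (measurePreserving_reflection hab).integrable_comp_emb
    (reflectionEquiv hab).measurableEmbedding |>.2 hF

end Reflection

section Product

variable {φ₁ φ₂ : ℝ → ℝ} (a b : ℝ)

lemma hasDerivAt_mul_comp_reflection (h₁diff : Differentiable ℝ φ₁)
    (h₂diff : Differentiable ℝ φ₂) (y t : ℝ) :
    HasDerivAt (fun t => φ₁ (a * y + b * t) * φ₂ (b * y - a * t))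
      (b * deriv φ₁ (a * y + b * t) * φ₂ (b * y - a * t)
        - a * φ₁ (a * y + b * t) * deriv φ₂ (b * y - a * t)) t := by
  have h₁ : HasDerivAt (fun t => φ₁ (a * y + b * t)) (deriv φ₁ (a * y + b * t) * b) t :=
    (h₁diff _).hasDerivAt.comp t (((hasDerivAt_id t).const_mul b).const_add (a * y) |>.congr_deriv
      (mul_one b))
  have h₂ : HasDerivAt (fun t => φ₂ (b * y - a * t)) (deriv φ₂ (b * y - a * t) * -a) t :=
    (h₂diff _).hasDerivAt.comp t (((hasDerivAt_id t).const_mul a).const_sub (b * y) |>.congr_deriv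
      (by simp))
  exact (h₁.mul h₂).congr_deriv (by ring)

/-- `(∂_{(b,-a)} p)² / p` for the product density `p(u, v) = φ₁(u) φ₂(v)`. -/
noncomputable def directionalFisherIntegrand (φ₁ φ₂ : ℝ → ℝ) (a b : ℝ) (p : ℝ × ℝ) : ℝ :=
  (b * deriv φ₁ p.1 * φ₂ p.2 - a * φ₁ p.1 * deriv φ₂ p.2) ^ 2 / (φ₁ p.1 * φ₂ p.2)

lemma directionalFisherIntegrand_reflection (h₁diff : Differentiable ℝ φ₁)
    (h₂diff : Differentiable ℝ φ₂) (y t : ℝ) :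
    directionalFisherIntegrand φ₁ φ₂ a b (reflection a b (y, t)) =
      (deriv (fun t => φ₁ (a * y + b * t) * φ₂ (b * y - a * t)) t) ^ 2
        / (φ₁ (a * y + b * t) * φ₂ (b * y - a * t)) := by
  rw [(hasDerivAt_mul_comp_reflection a b h₁diff h₂diff y t).deriv]
  rfl

lemma directionalFisherIntegrand_eq (h₁nn : ∀ x, 0 ≤ φ₁ x) (h₂nn : ∀ x, 0 ≤ φ₂ x)
    (p : ℝ × ℝ) :
    directionalFisherIntegrand φ₁ φ₂ a b p =
      b ^ 2 * ((deriv φ₁ p.1) ^ 2 / φ₁ p.1 * φ₂ p.2)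
        + a ^ 2 * (φ₁ p.1 * ((deriv φ₂ p.2) ^ 2 / φ₂ p.2))
        - 2 * a * b * (deriv φ₁ p.1 * deriv φ₂ p.2) := by
  unfold directionalFisherIntegrand
  rcases eq_or_ne (φ₁ p.1) 0 with h₁ | h₁
  · simp [h₁, deriv_eq_zero_of_nonneg_of_eq_zero h₁nn h₁]
  rcases eq_or_ne (φ₂ p.2) 0 with h₂ | h₂
  · simp [h₂, deriv_eq_zero_of_nonneg_of_eq_zero h₂nn h₂]
  field_simp
  ring

lemma integrable_directionalFisherIntegrand (h₁nn : ∀ x, 0 ≤ φ₁ x) (h₂nn : ∀ x, 0 ≤ φ₂ x)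
    (hφ₁ : Integrable φ₁) (hφ₂ : Integrable φ₂)
    (h₁fin : Integrable fun x => (deriv φ₁ x) ^ 2 / φ₁ x)
    (h₂fin : Integrable fun x => (deriv φ₂ x) ^ 2 / φ₂ x) :
    Integrable (directionalFisherIntegrand φ₁ φ₂ a b) := by
  have hd₁ := integrable_deriv_of_integrable_fisher h₁nn hφ₁ h₁fin
  have hd₂ := integrable_deriv_of_integrable_fisher h₂nn hφ₂ h₂fin
  rw [funext (directionalFisherIntegrand_eq a b h₁nn h₂nn)]
  exact (((h₁fin.mul_prod hφ₂).const_mul _).add ((hφ₁.mul_prod h₂fin).const_mul _)).sub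
    ((hd₁.mul_prod hd₂).const_mul _)

lemma integral_directionalFisherIntegrand (h₁nn : ∀ x, 0 ≤ φ₁ x) (h₂nn : ∀ x, 0 ≤ φ₂ x)
    (h₁int : ∫ x, φ₁ x = 1) (h₂int : ∫ x, φ₂ x = 1)
    (h₁diff : Differentiable ℝ φ₁) (h₂diff : Differentiable ℝ φ₂)
    (h₁fin : Integrable fun x => (deriv φ₁ x) ^ 2 / φ₁ x)
    (h₂fin : Integrable fun x => (deriv φ₂ x) ^ 2 / φ₂ x) :
    ∫ p, directionalFisherIntegrand φ₁ φ₂ a b p =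
      b ^ 2 * fisherInfo φ₁ + a ^ 2 * fisherInfo φ₂ := by
  have hφ₁ := Integrable.of_integral_ne_zero (h₁int ▸ one_ne_zero)
  have hφ₂ := Integrable.of_integral_ne_zero (h₂int ▸ one_ne_zero)
  have hd₁ := integrable_deriv_of_integrable_fisher h₁nn hφ₁ h₁fin
  have hd₂ := integrable_deriv_of_integrable_fisher h₂nn hφ₂ h₂fin
  have hmean₁ : ∫ x, deriv φ₁ x = 0 :=
    integral_eq_zero_of_hasDerivAt_of_integrable (fun x => (h₁diff x).hasDerivAt) hd₁ hφ₁
  have hmean₂ : ∫ x, deriv φ₂ x = 0 :=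
    integral_eq_zero_of_hasDerivAt_of_integrable (fun x => (h₂diff x).hasDerivAt) hd₂ hφ₂
  have I₁ := (h₁fin.mul_prod hφ₂).const_mul (b ^ 2)
  have I₂ := (hφ₁.mul_prod h₂fin).const_mul (a ^ 2)
  have I₃ := (hd₁.mul_prod hd₂).const_mul (2 * a * b)
  simp only [funext (directionalFisherIntegrand_eq a b h₁nn h₂nn), Measure.volume_eq_prod]
  rw [integral_sub (by exact I₁.add I₂) I₃, integral_add I₁ I₂, integral_const_mul,
    integral_const_mul, integral_const_mul, integral_prod_mul (fun x => (deriv φ₁ x) ^ 2 / φ₁ x) φ₂,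
    integral_prod_mul φ₁ (fun x => (deriv φ₂ x) ^ 2 / φ₂ x), integral_prod_mul,
    h₁int, h₂int, hmean₁, hmean₂, fisherInfo, fisherInfo]
  ring

end Product

/-- Let `X₁ ∼ φ₁`, `X₂ ∼ φ₂` be independent continuous random variables with differentiable
densities of finite Fisher information, `λ ∈ [0,1]`, and `Y₁ = λX₁ + √(1-λ²)X₂`,
`Y₂ = √(1-λ²)X₁ - λX₂`.  Then the conditional Fisher information
`J(Y₂|Y₁) = E_{y∼Y₁}[J(⟨Y₂|Y₁=y⟩)]` equals `(1-λ²)J(X₁) + λ²J(X₂)`.  Here the density of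
`Y₁` is `φ_{Y₁}(y) = ∫ φ₁(λy+√(1-λ²)t)·φ₂(√(1-λ²)y-λt) dt` and the conditional density of
`Y₂` given `Y₁ = y` is `t ↦ φ₁(λy+√(1-λ²)t)·φ₂(√(1-λ²)y-λt)/φ_{Y₁}(y)`. -/
theorem conditional_fisher_rotation (φ₁ φ₂ : ℝ → ℝ)
    (h₁nn : ∀ x, 0 ≤ φ₁ x) (h₂nn : ∀ x, 0 ≤ φ₂ x)
    (h₁int : ∫ x, φ₁ x = 1) (h₂int : ∫ x, φ₂ x = 1)
    (h₁diff : Differentiable ℝ φ₁) (h₂diff : Differentiable ℝ φ₂)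
    (h₁fin : Integrable (fun x => (deriv φ₁ x) ^ 2 / φ₁ x))
    (h₂fin : Integrable (fun x => (deriv φ₂ x) ^ 2 / φ₂ x))
    (lam : ℝ) (hlam : lam ∈ Set.Icc (0:ℝ) 1) :
    (∫ y, (∫ t, φ₁ (lam * y + Real.sqrt (1 - lam ^ 2) * t)
              * φ₂ (Real.sqrt (1 - lam ^ 2) * y - lam * t)) *
        fisherInfo (fun t =>
          φ₁ (lam * y + Real.sqrt (1 - lam ^ 2) * t)
            * φ₂ (Real.sqrt (1 - lam ^ 2) * y - lam * t) /
          ∫ s, φ₁ (lam * y + Real.sqrt (1 - lam ^ 2) * s)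
            * φ₂ (Real.sqrt (1 - lam ^ 2) * y - lam * s)))
      = (1 - lam ^ 2) * fisherInfo φ₁ + lam ^ 2 * fisherInfo φ₂ := by
  set b := Real.sqrt (1 - lam ^ 2)
  have hb : b ^ 2 = 1 - lam ^ 2 := Real.sq_sqrt (by nlinarith [hlam.1, hlam.2])
  have hab : lam ^ 2 + b ^ 2 = 1 := by rw [hb]; ring
  have hφ₁ := Integrable.of_integral_ne_zero (h₁int ▸ one_ne_zero)
  have hφ₂ := Integrable.of_integral_ne_zero (h₂int ▸ one_ne_zero)
  have hslices : ∀ᵐ y, Integrable fun t => φ₁ (lam * y + b * t) * φ₂ (b * y - lam * t) :=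
    (integrable_comp_reflection hab (hφ₁.mul_prod hφ₂)).prod_right_ae
  have hG := integrable_comp_reflection hab
    (integrable_directionalFisherIntegrand lam b h₁nn h₂nn hφ₁ hφ₂ h₁fin h₂fin)
  calc _ = ∫ y, ∫ t, directionalFisherIntegrand φ₁ φ₂ lam b (reflection lam b (y, t)) := by
        refine integral_congr_ae ?_
        filter_upwards [hslices] with y hy
        rw [integral_mul_fisherInfo_div_integral (fun t => mul_nonneg (h₁nn _) (h₂nn _)) hy]
        simp only [directionalFisherIntegrand_reflection lam b h₁diff h₂diff]
    _ = ∫ p, directionalFisherIntegrand φ₁ φ₂ lam b (reflection lam b p) :=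
        (integral_prod _ hG).symm
    _ = ∫ p, directionalFisherIntegrand φ₁ φ₂ lam b p := integral_comp_reflection hab _
    _ = _ := by
        rw [integral_directionalFisherIntegrand lam b h₁nn h₂nn h₁int h₂int h₁diff h₂diff h₁fin
          h₂fin, hb]
end

section
/- Let X₁, X₂ be independent nonsingular real random variables with E[X₁²], E[X₂²] < ∞, and set Y₁ = (X₁+X₂)/√2, Y₂ = (X₁-X₂)/√2. Then the Rényi information dimensions satisfy d(Y₁) = 1 - (1 - d(X₁))(1 - d(X₂)) and d(Y₂|Y₁) = d(X₁)·d(X₂). -/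
open MeasureTheory ProbabilityTheory

/-- A measure on `ℝ` is nonsingular if its singular part w.r.t. Lebesgue measure is carried
by a countable set (purely atomic), i.e. there is no singular continuous component. -/
def Nonsingular (μ : Measure ℝ) : Prop :=
  ∃ s : Set ℝ, s.Countable ∧ μ.singularPart volume sᶜ = 0

/-- The weight of the absolutely continuous component of a measure on `ℝ`; for a nonsingular
random variable with finite second moment this is its Rényi information dimension. -/
noncomputable def acWeight (μ : Measure ℝ) : ℝ :=
  (∫⁻ x, μ.rnDeriv volume x).toReal

/-!
Write each law as `μᵢ = μᵢ|sᵢ + μᵢ|sᵢᶜ` with `sᵢ` countable and `μᵢ|sᵢᶜ` absolutely continuous of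
mass `d(Xᵢ)`. Under `(x, y) ↦ (x + y)/√2` the product of the two atomic parts stays atomic, while a
product with an absolutely continuous factor becomes absolutely continuous; this gives `d(Y₁)`.

For `d(Y₂|Y₁)`, the singular parts of the conditional laws `κ y` are carried by one measurable set
`A` with Lebesgue-null slices. Removing `A` and the lines through the atoms leaves a set `G` with
`∫ d(κ y) = P((Y₁, Y₂) ∈ G)`. The Hadamard map is a linear involution, so it pulls `G` back to
`(s₁ᶜ ×ˢ s₂ᶜ)` minus a Lebesgue-null set, whose mass under `μ₁ ⊗ μ₂` is `d(X₁) d(X₂)`.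
-/

open Set

lemma acWeight_eq_of_add {μ ρ ν : Measure ℝ} [IsFiniteMeasure ν] (hρ : ρ ⟂ₘ volume)
    (hν : ν ≪ volume) (h : μ = ρ + ν) : acWeight μ = ν.real univ := by
  have hν_eq : volume.withDensity (ν.rnDeriv volume) = ν :=
    Measure.withDensity_rnDeriv_eq _ _ hν
  have hμ_eq : volume.withDensity (ν.rnDeriv volume) = volume.withDensity (μ.rnDeriv volume) :=
    Measure.eq_withDensity_rnDeriv (Measure.measurable_rnDeriv ν volume) hρ (by rw [h, hν_eq])
  rw [acWeight, ← setLIntegral_univ, ← withDensity_apply _ MeasurableSet.univ, ← hμ_eq, hν_eq,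
    measureReal_def]

lemma acWeight_eq_measureReal {μ : Measure ℝ} [IsFiniteMeasure μ] {t : Set ℝ}
    (ht : MeasurableSet t) (htc : volume tᶜ = 0) (hac : μ.restrict t ≪ volume) :
    acWeight μ = μ.real t := by
  have hsing : μ.restrict tᶜ ⟂ₘ volume :=
    ⟨t, ht, by rw [Measure.restrict_apply ht, inter_compl_self, measure_empty], htc⟩
  rw [acWeight_eq_of_add hsing hac (by rw [add_comm, Measure.restrict_add_restrict_compl ht]),
    measureReal_restrict_apply_univ]

lemma MeasureTheory.Measure.restrict_absolutelyContinuous_of_singularPart_eq_zero {α : Type*}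
    [MeasurableSpace α] {μ ν : Measure α} [μ.HaveLebesgueDecomposition ν] {t : Set α}
    (h : μ.singularPart ν t = 0) : μ.restrict t ≪ ν := by
  conv_lhs => rw [μ.haveLebesgueDecomposition_add ν]
  rw [Measure.restrict_add, Measure.restrict_eq_zero.mpr h, zero_add]
  exact (Measure.absolutelyContinuous_of_le Measure.restrict_le_self).trans
    (withDensity_absolutelyContinuous _ _)

lemma Nonsingular.exists_countable_restrict_compl {μ : Measure ℝ} [IsFiniteMeasure μ]
    (h : Nonsingular μ) :
    ∃ s : Set ℝ, s.Countable ∧ μ.restrict sᶜ ≪ volume ∧ acWeight μ = μ.real sᶜ := by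
  obtain ⟨s, hs, hsing⟩ := h
  have hac := Measure.restrict_absolutelyContinuous_of_singularPart_eq_zero hsing
  exact ⟨s, hs, hac, acWeight_eq_measureReal hs.measurableSet.compl
    (by rw [compl_compl]; exact hs.measure_zero _) hac⟩

lemma MeasureTheory.Measure.prod_restrict_compl_prod_absolutelyContinuous {α β : Type*}
    [MeasurableSpace α] [MeasurableSpace β] (μ₁ : Measure α) (μ₂ : Measure β) [SFinite μ₁]
    [SFinite μ₂] (s₁ : Set α) (s₂ : Set β) :
    (μ₁.prod μ₂).restrict (s₁ ×ˢ s₂)ᶜ ≪ (μ₁.restrict s₁ᶜ).prod μ₂ + μ₁.prod (μ₂.restrict s₂ᶜ) := by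
  refine Measure.absolutelyContinuous_of_le ?_
  rw [compl_prod_eq_union]
  calc (μ₁.prod μ₂).restrict (s₁ᶜ ×ˢ univ ∪ univ ×ˢ s₂ᶜ)
      ≤ (μ₁.prod μ₂).restrict (s₁ᶜ ×ˢ univ) + (μ₁.prod μ₂).restrict (univ ×ˢ s₂ᶜ) :=
        Measure.restrict_union_le _ _
    _ = (μ₁.restrict s₁ᶜ).prod μ₂ + μ₁.prod (μ₂.restrict s₂ᶜ) := by
        rw [← Measure.prod_restrict, ← Measure.prod_restrict, Measure.restrict_univ,
          Measure.restrict_univ]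

lemma volume_preimage_add_div_eq_zero {s : Set ℝ} (hs : volume s = 0) (x : ℝ) {c : ℝ}
    (hc : c ≠ 0) : volume ((fun y => (x + y) / c) ⁻¹' s) = 0 := by
  have h : (fun y : ℝ => (x + y) / c) ⁻¹' s = (x + ·) ⁻¹' ((· * c⁻¹) ⁻¹' s) := rfl
  rw [h, measure_preimage_add, Real.volume_preimage_mul_right (inv_ne_zero hc), hs, mul_zero]

lemma map_add_div_prod_absolutelyContinuous_of_right (ρ η : Measure ℝ) [SFinite ρ] [SFinite η]
    (hη : η ≪ volume) {c : ℝ} (hc : c ≠ 0) :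
    (ρ.prod η).map (fun p => (p.1 + p.2) / c) ≪ volume := by
  have hT : Measurable (fun p : ℝ × ℝ => (p.1 + p.2) / c) := by fun_prop
  refine Measure.AbsolutelyContinuous.mk fun s hs hs0 => ?_
  rw [Measure.map_apply hT hs, Measure.prod_apply (hT hs)]
  exact (lintegral_congr fun x => hη (volume_preimage_add_div_eq_zero hs0 x hc)).trans
    lintegral_zero

lemma map_add_div_prod_absolutelyContinuous_of_left (ρ η : Measure ℝ) [SFinite ρ] [SFinite η]
    (hρ : ρ ≪ volume) {c : ℝ} (hc : c ≠ 0) :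
    (ρ.prod η).map (fun p => (p.1 + p.2) / c) ≪ volume := by
  rw [← Measure.prod_swap, Measure.map_map (by fun_prop) measurable_swap]
  simpa only [Function.comp_def, Prod.fst_swap, Prod.snd_swap, add_comm]
    using map_add_div_prod_absolutelyContinuous_of_right η ρ hρ hc

lemma MeasureTheory.Measure.map_restrict_mutuallySingular_volume_of_countable {α : Type*}
    [MeasurableSpace α] {m : Measure α} {f : α → ℝ} (hf : Measurable f) {u : Set α}
    (hu : (f '' u).Countable) :
    (m.restrict u).map f ⟂ₘ volume := by
  refine ⟨(f '' u)ᶜ, hu.measurableSet.compl, ?_, by rw [compl_compl]; exact hu.measure_zero _⟩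
  rw [Measure.map_apply hf hu.measurableSet.compl,
    Measure.restrict_apply (hf hu.measurableSet.compl)]
  exact measure_mono_null (fun x ⟨hx, hxu⟩ => hx (mem_image_of_mem f hxu)) measure_empty

lemma acWeight_map_add_div_prod {μ₁ μ₂ : Measure ℝ} [IsProbabilityMeasure μ₁]
    [IsProbabilityMeasure μ₂] {s₁ s₂ : Set ℝ} (hs₁ : s₁.Countable) (hs₂ : s₂.Countable)
    (hac₁ : μ₁.restrict s₁ᶜ ≪ volume) (hac₂ : μ₂.restrict s₂ᶜ ≪ volume) {c : ℝ} (hc : c ≠ 0) :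
    acWeight ((μ₁.prod μ₂).map (fun p => (p.1 + p.2) / c))
      = 1 - (1 - μ₁.real s₁ᶜ) * (1 - μ₂.real s₂ᶜ) := by
  set T : ℝ × ℝ → ℝ := fun p => (p.1 + p.2) / c
  have hT : Measurable T := by fun_prop
  have hu : MeasurableSet (s₁ ×ˢ s₂) := hs₁.measurableSet.prod hs₂.measurableSet
  have hsing : ((μ₁.prod μ₂).restrict (s₁ ×ˢ s₂)).map T ⟂ₘ volume :=
    Measure.map_restrict_mutuallySingular_volume_of_countable hT ((hs₁.prod hs₂).image T)
  have hac : ((μ₁.prod μ₂).restrict (s₁ ×ˢ s₂)ᶜ).map T ≪ volume := by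
    refine ((Measure.prod_restrict_compl_prod_absolutelyContinuous μ₁ μ₂ s₁ s₂).map hT).trans ?_
    rw [Measure.map_add _ _ hT]
    exact (map_add_div_prod_absolutelyContinuous_of_left _ _ hac₁ hc).add_left
      (map_add_div_prod_absolutelyContinuous_of_right _ _ hac₂ hc)
  rw [acWeight_eq_of_add hsing hac (by rw [← Measure.map_add _ _ hT,
      Measure.restrict_add_restrict_compl hu]), measureReal_def, Measure.map_apply hT .univ,
    preimage_univ, Measure.restrict_apply_univ, ← measureReal_def, probReal_compl_eq_one_sub hu,
    measureReal_prod_prod, probReal_compl_eq_one_sub hs₁.measurableSet,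
    probReal_compl_eq_one_sub hs₂.measurableSet, sub_sub_cancel, sub_sub_cancel]

noncomputable def hadamard : (ℝ × ℝ) ≃ₗ[ℝ] (ℝ × ℝ) :=
  LinearEquiv.ofInvolutive
    { toFun := fun p => ((p.1 + p.2) / √2, (p.1 - p.2) / √2)
      map_add' := fun p q => by ext <;> simp only [Prod.fst_add, Prod.snd_add] <;> ring
      map_smul' := fun a p => by ext <;> simp only [Prod.smul_fst, Prod.smul_snd, smul_eq_mul,
        RingHom.id_apply] <;> ring }
    (fun p => by
      have h (x : ℝ) : x / √2 / √2 = x / 2 := by rw [div_div, Real.mul_self_sqrt zero_le_two]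
      ext
      · change ((p.1 + p.2) / √2 + (p.1 - p.2) / √2) / √2 = p.1
        rw [← add_div, h]; ring
      · change ((p.1 + p.2) / √2 - (p.1 - p.2) / √2) / √2 = p.2
        rw [← sub_div, h]; ring)

@[simp]
lemma hadamard_apply (p : ℝ × ℝ) : hadamard p = ((p.1 + p.2) / √2, (p.1 - p.2) / √2) := rfl

lemma hadamard_hadamard (p : ℝ × ℝ) : hadamard (hadamard p) = p :=
  hadamard.symm_apply_apply p

lemma measurable_hadamard : Measurable hadamard :=
  hadamard.toContinuousLinearEquiv.continuous.measurable

lemma ProbabilityTheory.Kernel.exists_slice_null_restrict_compl_absolutelyContinuous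
    {α γ : Type*} [MeasurableSpace α] [MeasurableSpace γ]
    [MeasurableSpace.CountableOrCountablyGenerated α γ] (κ : Kernel α γ) [IsFiniteKernel κ]
    (ν : Measure γ) [SFinite ν] :
    ∃ A : Set (α × γ), MeasurableSet A ∧
      ∀ a, ν (Prod.mk a ⁻¹' A) = 0 ∧ (κ a).restrict (Prod.mk a ⁻¹' A)ᶜ ≪ ν := by
  -- `ν` may be infinite, but kernel Lebesgue decompositions need a finite reference kernel
  set η := Kernel.const α ν.toFinite
  refine ⟨κ.mutuallySingularSet η, κ.measurableSet_mutuallySingularSet η, fun a => ⟨?_, ?_⟩⟩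
  · exact absolutelyContinuous_toFinite ν (κ.measure_mutuallySingularSetSlice η a)
  · nth_rewrite 1 [← κ.rnDeriv_add_singularPart η]
    have hsing : κ.singularPart η a (Prod.mk a ⁻¹' κ.mutuallySingularSet η)ᶜ = 0 :=
      Kernel.singularPart_of_subset_compl_mutuallySingularSetSlice subset_rfl
    rw [FunLike.coe_add, Pi.add_apply, Measure.restrict_add, Measure.restrict_eq_zero.mpr hsing,
      add_zero, Kernel.withDensity_apply _ (κ.measurable_rnDeriv η)]
    exact (Measure.absolutelyContinuous_of_le Measure.restrict_le_self).trans
      ((MeasureTheory.withDensity_absolutelyContinuous _ _).trans (toFinite_absolutelyContinuous ν))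

lemma integral_acWeight_eq_compProd_apply {ρ : Measure ℝ} [SFinite ρ] (κ : Kernel ℝ ℝ)
    [IsFiniteKernel κ] {G : Set (ℝ × ℝ)} (hG : MeasurableSet G)
    (hnull : ∀ y, volume (Prod.mk y ⁻¹' G)ᶜ = 0)
    (hac : ∀ y, (κ y).restrict (Prod.mk y ⁻¹' G) ≪ volume) :
    ∫ y, acWeight (κ y) ∂ρ = (ρ ⊗ₘ κ).real G := by
  calc ∫ y, acWeight (κ y) ∂ρ = ∫ y, (κ y (Prod.mk y ⁻¹' G)).toReal ∂ρ :=
        integral_congr_ae (ae_of_all _ fun y =>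
          acWeight_eq_measureReal (measurable_prodMk_left hG) (hnull y) (hac y))
    _ = (∫⁻ y, κ y (Prod.mk y ⁻¹' G) ∂ρ).toReal :=
        integral_toReal (Kernel.measurable_kernel_prodMk_left hG).aemeasurable
          (ae_of_all _ fun y => measure_lt_top _ _)
    _ = (ρ ⊗ₘ κ).real G := by rw [measureReal_def, Measure.compProd_apply hG]

lemma countable_compl_slice_hadamard_preimage {s₁ s₂ : Set ℝ} (hs₁ : s₁.Countable)
    (hs₂ : s₂.Countable) (y : ℝ) :
    (Prod.mk y ⁻¹' (hadamard ⁻¹' (s₁ᶜ ×ˢ s₂ᶜ)))ᶜ.Countable := by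
  have h : (Prod.mk y ⁻¹' (hadamard ⁻¹' (s₁ᶜ ×ˢ s₂ᶜ)))ᶜ
      = ((· / √2) ∘ (y + ·)) ⁻¹' s₁ ∪ ((· / √2) ∘ (y - ·)) ⁻¹' s₂ := by
    ext z
    simp only [mem_compl_iff, mem_preimage, hadamard_apply, mem_prod, not_and_or, not_not,
      Function.comp_apply, mem_union]
  rw [h]
  have hdiv : Function.Injective (· / √2 : ℝ → ℝ) := fun a b h =>
    (div_left_inj' (by positivity)).mp h
  exact (hs₁.preimage (hdiv.comp (add_right_injective y))).union
    (hs₂.preimage (hdiv.comp sub_right_injective))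

lemma integral_acWeight_of_compProd_eq_map_hadamard {μ₁ μ₂ : Measure ℝ} [IsFiniteMeasure μ₁]
    [IsFiniteMeasure μ₂] {s₁ s₂ : Set ℝ} (hs₁ : s₁.Countable) (hs₂ : s₂.Countable)
    (hac₁ : μ₁.restrict s₁ᶜ ≪ volume) (hac₂ : μ₂.restrict s₂ᶜ ≪ volume) {ρ : Measure ℝ}
    [SFinite ρ] (κ : Kernel ℝ ℝ) [IsFiniteKernel κ]
    (hκ : ρ ⊗ₘ κ = (μ₁.prod μ₂).map hadamard) :
    ∫ y, acWeight (κ y) ∂ρ = μ₁.real s₁ᶜ * μ₂.real s₂ᶜ := by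
  obtain ⟨A, hA, hAκ⟩ := κ.exists_slice_null_restrict_compl_absolutelyContinuous volume
  have hmeas : MeasurableSet (s₁ᶜ ×ˢ s₂ᶜ) :=
    hs₁.measurableSet.compl.prod hs₂.measurableSet.compl
  set G := Aᶜ ∩ hadamard ⁻¹' (s₁ᶜ ×ˢ s₂ᶜ)
  have hG : MeasurableSet G := hA.compl.inter (measurable_hadamard hmeas)
  have hG_null (y : ℝ) : volume (Prod.mk y ⁻¹' G)ᶜ = 0 := by
    rw [preimage_inter, compl_inter, preimage_compl, compl_compl]
    exact measure_union_null (hAκ y).1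
      ((countable_compl_slice_hadamard_preimage hs₁ hs₂ y).measure_zero _)
  have hG_ac (y : ℝ) : (κ y).restrict (Prod.mk y ⁻¹' G) ≪ volume :=
    (Measure.absolutelyContinuous_of_le (Measure.restrict_mono inter_subset_left le_rfl)).trans
      (hAκ y).2
  have hA_null : volume (hadamard ⁻¹' A) = 0 := by
    have hA_vol : volume A = 0 := by
      rw [Measure.volume_eq_prod]
      exact Measure.measure_prod_null_of_ae_null hA (ae_of_all _ fun y => (hAκ y).1)
    rw [Measure.addHaar_preimage_linearEquiv, hA_vol, mul_zero]
  have hG_pre : hadamard ⁻¹' G = (hadamard ⁻¹' A)ᶜ ∩ s₁ᶜ ×ˢ s₂ᶜ := by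
    ext p
    simp only [G, mem_preimage, mem_inter_iff, mem_compl_iff, hadamard_hadamard]
  rw [integral_acWeight_eq_compProd_apply κ hG hG_null hG_ac, hκ,
    map_measureReal_apply measurable_hadamard hG, hG_pre, ← measureReal_restrict_apply' hmeas,
    ← Measure.prod_restrict]
  have hnull : (μ₁.restrict s₁ᶜ).prod (μ₂.restrict s₂ᶜ) (hadamard ⁻¹' A) = 0 :=
    hac₁.prod hac₂ (by rwa [← Measure.volume_eq_prod])
  rw [measureReal_compl (measurable_hadamard hA), measureReal_def _ (hadamard ⁻¹' A), hnull,
    ENNReal.toReal_zero, sub_zero, ← univ_prod_univ, measureReal_prod_prod,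
    measureReal_restrict_apply_univ, measureReal_restrict_apply_univ]

theorem rid_hadamard_transform_general {Ω : Type*} [MeasurableSpace Ω] (P : Measure Ω)
    [IsProbabilityMeasure P] (X₁ X₂ : Ω → ℝ)
    (hX₁ : Measurable X₁) (hX₂ : Measurable X₂)
    (hindep : IndepFun X₁ X₂ P)
    (hns₁ : Nonsingular (Measure.map X₁ P)) (hns₂ : Nonsingular (Measure.map X₂ P))
    (Y₁ Y₂ : Ω → ℝ)
    (hY₁ : Y₁ = fun ω => (X₁ ω + X₂ ω) / Real.sqrt 2)
    (hY₂ : Y₂ = fun ω => (X₁ ω - X₂ ω) / Real.sqrt 2)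
    (κ : Kernel ℝ ℝ) [IsMarkovKernel κ]
    (hκ : (Measure.map Y₁ P).compProd κ = Measure.map (fun ω => (Y₁ ω, Y₂ ω)) P) :
    acWeight (Measure.map Y₁ P)
        = 1 - (1 - acWeight (Measure.map X₁ P)) * (1 - acWeight (Measure.map X₂ P)) ∧
      ∫ y, acWeight (κ y) ∂(Measure.map Y₁ P)
        = acWeight (Measure.map X₁ P) * acWeight (Measure.map X₂ P) := by
  have : IsProbabilityMeasure (P.map X₁) := Measure.isProbabilityMeasure_map hX₁.aemeasurable
  have : IsProbabilityMeasure (P.map X₂) := Measure.isProbabilityMeasure_map hX₂.aemeasurable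
  obtain ⟨s₁, hs₁, hac₁, hw₁⟩ := hns₁.exists_countable_restrict_compl
  obtain ⟨s₂, hs₂, hac₂, hw₂⟩ := hns₂.exists_countable_restrict_compl
  have hX : Measurable fun ω => (X₁ ω, X₂ ω) := hX₁.prodMk hX₂
  have hjoint : P.map (fun ω => (X₁ ω, X₂ ω)) = (P.map X₁).prod (P.map X₂) :=
    (indepFun_iff_map_prod_eq_prod_map_map hX₁.aemeasurable hX₂.aemeasurable).mp hindep
  have hlaw : P.map (fun ω => (Y₁ ω, Y₂ ω)) = ((P.map X₁).prod (P.map X₂)).map hadamard := by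
    rw [← hjoint, Measure.map_map measurable_hadamard hX, hY₁, hY₂]
    rfl
  have hlaw₁ : P.map Y₁ = ((P.map X₁).prod (P.map X₂)).map (fun p => (p.1 + p.2) / √2) := by
    rw [← hjoint, Measure.map_map (by fun_prop) hX, hY₁]
    rfl
  rw [hw₁, hw₂]
  exact ⟨hlaw₁ ▸ acWeight_map_add_div_prod hs₁ hs₂ hac₁ hac₂ (by positivity),
    integral_acWeight_of_compProd_eq_map_hadamard hs₁ hs₂ hac₁ hac₂ κ (hκ.trans hlaw)⟩

/-- Let `X₁, X₂` be independent nonsingular real random variables with finite second moments,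
and `Y₁ = (X₁+X₂)/√2`, `Y₂ = (X₁-X₂)/√2`.  Then the Rényi information dimensions (which for
nonsingular laws with finite second moment equal the weights of the absolutely continuous
parts, conditionally for a.e. value of the conditioning variable) satisfy
`d(Y₁) = 1 - (1 - d(X₁))(1 - d(X₂))` and `d(Y₂|Y₁) = E_{y∼Y₁}[d(Y₂|Y₁=y)] = d(X₁)·d(X₂)`,
where `κ` is (any) regular conditional distribution of `Y₂` given `Y₁`. -/
theorem rid_hadamard_transform {Ω : Type*} [MeasurableSpace Ω] (P : Measure Ω)
    [IsProbabilityMeasure P] (X₁ X₂ : Ω → ℝ)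
    (hX₁ : Measurable X₁) (hX₂ : Measurable X₂)
    (hindep : IndepFun X₁ X₂ P)
    (hmom₁ : Integrable (fun ω => (X₁ ω) ^ 2) P)
    (hmom₂ : Integrable (fun ω => (X₂ ω) ^ 2) P)
    (hns₁ : Nonsingular (Measure.map X₁ P)) (hns₂ : Nonsingular (Measure.map X₂ P))
    (Y₁ Y₂ : Ω → ℝ)
    (hY₁ : Y₁ = fun ω => (X₁ ω + X₂ ω) / Real.sqrt 2)
    (hY₂ : Y₂ = fun ω => (X₁ ω - X₂ ω) / Real.sqrt 2)
    (κ : Kernel ℝ ℝ) [IsMarkovKernel κ]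
    (hκ : (Measure.map Y₁ P).compProd κ = Measure.map (fun ω => (Y₁ ω, Y₂ ω)) P) :
    acWeight (Measure.map Y₁ P)
        = 1 - (1 - acWeight (Measure.map X₁ P)) * (1 - acWeight (Measure.map X₂ P)) ∧
      ∫ y, acWeight (κ y) ∂(Measure.map Y₁ P)
        = acWeight (Measure.map X₁ P) * acWeight (Measure.map X₂ P) :=
  rid_hadamard_transform_general P X₁ X₂ hX₁ hX₂ hindep hns₁ hns₂ Y₁ Y₂ hY₁ hY₂ κ hκ
end

section
/- Define q(c,d) = (1/2)·min over x,y ∈ [0,1] of max{dx - h₂(x) + cy - h₂(y), l(x,y)}, where l(x,y) ≥ (log₂ e/256)(2-x-y)² and l is doubly-decreasing in (x,y). If c + d ≤ 1, then q(c,d) ≥ C₀(c+d)⁴, where C₀ = (log₂ e/256) / (2·((log₂ e/256) + 2√2 + 1)⁴). -/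
lemma two_log_le (s : ℝ) (hs : 1 ≤ s) : 2 * Real.log s ≤ s - s⁻¹ := by
  set f : ℝ → ℝ := fun y => y - y⁻¹ - 2 * Real.log y with hf
  have hder : ∀ x : ℝ, 0 < x → HasDerivAt f (1 - (-(x^2)⁻¹) - 2 * x⁻¹) x := by
    intro x hx
    exact ((hasDerivAt_id x).sub (hasDerivAt_inv hx.ne')).sub
      ((Real.hasDerivAt_log hx.ne').const_mul 2)
  have mono : MonotoneOn f (Set.Ici 1) := by
    apply monotoneOn_of_deriv_nonneg (convex_Ici 1)
    · intro x hx
      exact (hder x (lt_of_lt_of_le one_pos hx)).continuousAt.continuousWithinAt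
    · rw [interior_Ici]
      intro x hx
      exact (hder x (lt_trans one_pos hx)).differentiableAt.differentiableWithinAt
    · rw [interior_Ici]
      intro x hx
      have hx0 : (0:ℝ) < x := lt_trans one_pos hx
      rw [(hder x hx0).deriv]
      have h1 : x * x⁻¹ = 1 := mul_inv_cancel₀ hx0.ne'
      have h2 : (x^2)⁻¹ = x⁻¹ * x⁻¹ := by rw [sq, mul_inv]
      nlinarith [sq_nonneg (1 - x⁻¹)]
  have := mono (Set.self_mem_Ici) (Set.mem_Ici.mpr hs) hs
  simp only [hf, Real.log_one] at this
  norm_num at this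
  linarith

lemma neg_mul_log_le (t : ℝ) (h0 : 0 ≤ t) (h1 : t ≤ 1) :
    -(t * Real.log t) ≤ Real.sqrt t * (1 - t) := by
  rcases eq_or_lt_of_le h0 with h | h
  · simp [← h]
  · have hst : 0 < Real.sqrt t := Real.sqrt_pos.mpr h
    have hle1 : Real.sqrt t ≤ 1 := by
      rw [show (1:ℝ) = Real.sqrt 1 by simp]
      exact Real.sqrt_le_sqrt h1
    have hinv : 1 ≤ (Real.sqrt t)⁻¹ := by
      rw [le_inv_comm₀ one_pos hst]
      simpa using hle1
    have key := two_log_le (Real.sqrt t)⁻¹ hinv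
    rw [Real.log_inv, inv_inv, Real.log_sqrt h0] at key
    have hsq : Real.sqrt t * Real.sqrt t = t := Real.mul_self_sqrt h0
    have h2 : -Real.log t ≤ (Real.sqrt t)⁻¹ - Real.sqrt t := by linarith
    have h3 : t * (Real.sqrt t)⁻¹ = Real.sqrt t := by
      rw [← div_eq_mul_inv, Real.div_sqrt]
    nlinarith [mul_le_mul_of_nonneg_left h2 h0]

lemma binEnt_aux (p : ℝ) (h0 : 0 ≤ p) (h1 : p ≤ 1) :
    -(p * Real.log p) - (1 - p) * Real.log (1 - p) ≤
      2 * Real.log 2 * Real.sqrt (1 - p) := by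
  have hq0 : (0:ℝ) ≤ 1 - p := by linarith
  have hq1 : 1 - p ≤ 1 := by linarith
  have e1 := neg_mul_log_le p h0 h1
  have e2 := neg_mul_log_le (1 - p) hq0 hq1
  set a := Real.sqrt p with ha
  set b := Real.sqrt (1 - p) with hb
  have ha0 : 0 ≤ a := Real.sqrt_nonneg _
  have hb0 : 0 ≤ b := Real.sqrt_nonneg _
  have ha2 : a * a = p := Real.mul_self_sqrt h0
  have hb2 : b * b = 1 - p := Real.mul_self_sqrt hq0
  have hr0 : (0:ℝ) ≤ Real.sqrt 2 := Real.sqrt_nonneg _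
  have hr2 : Real.sqrt 2 * Real.sqrt 2 = 2 := Real.mul_self_sqrt (by norm_num)
  have hr1 : 1 ≤ Real.sqrt 2 := by nlinarith
  have hrub : Real.sqrt 2 ≤ 1.415 := by nlinarith [sq_nonneg (Real.sqrt 2 - 1.415)]
  have hlog2 : 0.6931471803 < Real.log 2 := Real.log_two_gt_d9
  have claim : a * b + a * a ≤ 2 * Real.log 2 := by
    have h5 : a * b + a * a ≤ (1 + Real.sqrt 2) / 2 := by
      nlinarith [sq_nonneg (a - (Real.sqrt 2 + 1) * b), sq_nonneg (a - b)]
    linarith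
  have claim2 : a * (1 - p) + p * b ≤ 2 * Real.log 2 * b := by
    have heq : a * (1 - p) + p * b = b * (a * b + a * a) := by
      linear_combination (-a) * hb2 + (-b) * ha2
    rw [heq]
    calc b * (a * b + a * a) ≤ b * (2 * Real.log 2) :=
          mul_le_mul_of_nonneg_left claim hb0
      _ = 2 * Real.log 2 * b := by ring
  have h6 : 1 - (1 - p) = p := by ring
  rw [h6] at e2
  linarith

lemma binEnt_le (p : ℝ) (h0 : 0 ≤ p) (h1 : p ≤ 1) :
    binEnt p ≤ 2 * Real.sqrt (1 - p) := by
  have hlog2 : 0.6931471803 < Real.log 2 := Real.log_two_gt_d9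
  have hl2 : (0:ℝ) < Real.log 2 := by linarith
  have key := binEnt_aux p h0 h1
  have hEq : binEnt p * Real.log 2 =
      -(p * Real.log p) - (1 - p) * Real.log (1 - p) := by
    unfold binEnt
    rw [Real.logb, Real.logb]
    field_simp
  have : binEnt p * Real.log 2 ≤ (2 * Real.sqrt (1 - p)) * Real.log 2 := by
    rw [hEq]; linarith
  exact le_of_mul_le_mul_right this hl2

set_option maxHeartbeats 1600000 in
/-- Define `q(c,d) = (1/2)·min_{x,y ∈ [0,1]} max{dx - h₂(x) + cy - h₂(y), l(x,y)}`, where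
`l` is doubly-decreasing on `[0,1]²` and satisfies `l(x,y) ≥ (log₂ e/256)(2-x-y)²`.
If `c + d ≤ 1` (with `c, d ≥ 0`), then `q(c,d) ≥ C₀(c+d)⁴` where
`C₀ = (log₂ e/256) / (2·((log₂ e/256) + 2√2 + 1)⁴)`.  Since the minimum over the compact
set `[0,1]²` is attained, this is equivalent to the pointwise bound stated here. -/
theorem q_lower_bound (l : ℝ → ℝ → ℝ)
    (hl : ∀ x ∈ Set.Icc (0:ℝ) 1, ∀ y ∈ Set.Icc (0:ℝ) 1,
      Real.logb 2 (Real.exp 1) / 256 * (2 - x - y) ^ 2 ≤ l x y)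
    (hmono₁ : ∀ y ∈ Set.Icc (0:ℝ) 1, AntitoneOn (fun x => l x y) (Set.Icc 0 1))
    (hmono₂ : ∀ x ∈ Set.Icc (0:ℝ) 1, AntitoneOn (fun y => l x y) (Set.Icc 0 1))
    (c d : ℝ) (hc : 0 ≤ c) (hd : 0 ≤ d) (hcd : c + d ≤ 1) :
    ∀ x ∈ Set.Icc (0:ℝ) 1, ∀ y ∈ Set.Icc (0:ℝ) 1,
      Real.logb 2 (Real.exp 1) / 256 /
          (2 * (Real.logb 2 (Real.exp 1) / 256 + 2 * Real.sqrt 2 + 1) ^ 4) * (c + d) ^ 4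
        ≤ (1 / 2) * max (d * x - binEnt x + c * y - binEnt y) (l x y) := by
  intro x hx y hy
  obtain ⟨hx0, hx1⟩ := hx
  obtain ⟨hy0, hy1⟩ := hy
  have hlog2 : 0.6931471803 < Real.log 2 := Real.log_two_gt_d9
  have hl2 : (0:ℝ) < Real.log 2 := by linarith
  set K : ℝ := Real.logb 2 (Real.exp 1) / 256 with hKdef
  have hKval : K = (Real.log 2)⁻¹ / 256 := by
    rw [hKdef, Real.logb, Real.log_exp]
    rw [one_div]
  have hKpos : 0 < K := by rw [hKval]; positivity
  have hKle : K ≤ 1 / 128 := by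
    rw [hKval]
    have : (Real.log 2)⁻¹ ≤ 2 := by
      rw [inv_le_comm₀ hl2 (by norm_num)]
      linarith
    linarith
  clear_value K
  have hr0 : (0:ℝ) ≤ Real.sqrt 2 := Real.sqrt_nonneg _
  have hr2 : Real.sqrt 2 * Real.sqrt 2 = 2 := Real.mul_self_sqrt (by norm_num)
  have hr1 : 1 ≤ Real.sqrt 2 := by nlinarith
  have hrub : Real.sqrt 2 ≤ 1.415 := by nlinarith [sq_nonneg (Real.sqrt 2 - 1.415)]
  set M : ℝ := K + 2 * Real.sqrt 2 + 1 with hMdef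
  have hM1 : 1 ≤ M := by rw [hMdef]; nlinarith
  have hM0 : 0 < M := by linarith
  clear_value M
  set s : ℝ := c + d with hsdef
  clear_value s
  have hs0 : 0 ≤ s := by rw [hsdef]; positivity
  have hs1 : s ≤ 1 := hcd
  rcases le_or_gt (s ^ 2 / M ^ 2) (2 - x - y) with hcase | hcase
  · -- l is big
    have hl' := hl x ⟨hx0, hx1⟩ y ⟨hy0, hy1⟩
    have h1 : K * (s ^ 2 / M ^ 2) ^ 2 ≤ K * (2 - x - y) ^ 2 := by
      apply mul_le_mul_of_nonneg_left _ hKpos.le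
      exact pow_le_pow_left₀ (by positivity) hcase 2
    have h2 : K / (2 * M ^ 4) * s ^ 4 = (1 / 2) * (K * (s ^ 2 / M ^ 2) ^ 2) := by
      field_simp
    rw [h2]
    have h3 : K * (2 - x - y) ^ 2 ≤ l x y := hl'
    have h4 : l x y ≤ max (d * x - binEnt x + c * y - binEnt y) (l x y) := le_max_right _ _
    linarith
  · -- entropy term is big
    set t : ℝ := 2 - x - y with htdef
    clear_value t
    have ht0 : 0 ≤ t := by rw [htdef]; linarith
    have hbx := binEnt_le x hx0 hx1
    have hby := binEnt_le y hy0 hy1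
    -- sqrt(1-x) + sqrt(1-y) ≤ sqrt 2 * sqrt t
    set u := Real.sqrt (1 - x) with hu
    set v := Real.sqrt (1 - y) with hv
    have hu0 : 0 ≤ u := Real.sqrt_nonneg _
    have hv0 : 0 ≤ v := Real.sqrt_nonneg _
    have hu2 : u * u = 1 - x := Real.mul_self_sqrt (by linarith)
    have hv2 : v * v = 1 - y := Real.mul_self_sqrt (by linarith)
    have hw2 : Real.sqrt t * Real.sqrt t = t := Real.mul_self_sqrt ht0
    have hw0 : 0 ≤ Real.sqrt t := Real.sqrt_nonneg _
    have hsum : u + v ≤ Real.sqrt 2 * Real.sqrt t := by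
      have hq : (u + v) ^ 2 ≤ 2 * t := by nlinarith [sq_nonneg (u - v)]
      calc u + v = Real.sqrt ((u + v) ^ 2) := (Real.sqrt_sq (by positivity)).symm
        _ ≤ Real.sqrt (2 * t) := Real.sqrt_le_sqrt hq
        _ = Real.sqrt 2 * Real.sqrt t := Real.sqrt_mul (by norm_num) t
    -- sqrt t ≤ s / M
    have hst : Real.sqrt t ≤ s / M := by
      have h1 : t ≤ (s / M) ^ 2 := by
        rw [div_pow]; linarith
      calc Real.sqrt t ≤ Real.sqrt ((s / M) ^ 2) := Real.sqrt_le_sqrt h1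
        _ = s / M := Real.sqrt_sq (div_nonneg hs0 hM0.le)
    have htle : t ≤ s / M := by
      have hsm : s / M ≤ 1 := by
        rw [div_le_one hM0]; linarith
      have h1 : s ^ 2 / M ^ 2 ≤ s / M := by
        calc s ^ 2 / M ^ 2 = (s / M) * (s / M) := by ring
          _ ≤ 1 * (s / M) := mul_le_mul_of_nonneg_right hsm (div_nonneg hs0 hM0.le)
          _ = s / M := one_mul _
      linarith
    -- lower bound on the entropy term
    have hdx : d * x + c * y ≥ s - t := by
      have h1 : d * (1 - x) ≤ 1 - x := mul_le_of_le_one_left (by linarith) (by linarith)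
      have h2 : c * (1 - y) ≤ 1 - y := mul_le_of_le_one_left (by linarith) (by linarith)
      have h3 : d * x = d - d * (1 - x) := by ring
      have h4 : c * y = c - c * (1 - y) := by ring
      rw [hsdef, htdef]
      linarith
    have hF : d * x - binEnt x + c * y - binEnt y ≥ s - t - 2 * Real.sqrt 2 * Real.sqrt t := by
      have h5 : binEnt x + binEnt y ≤ 2 * (u + v) := by linarith
      have h6 : 2 * (u + v) ≤ 2 * (Real.sqrt 2 * Real.sqrt t) := by linarith
      linarith
    have hF2 : d * x - binEnt x + c * y - binEnt y ≥ s * K / M := by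
      have h1 : 2 * Real.sqrt 2 * Real.sqrt t ≤ 2 * Real.sqrt 2 * (s / M) :=
        mul_le_mul_of_nonneg_left hst (by positivity)
      have h2 : s - s / M - 2 * Real.sqrt 2 * (s / M) = s * K / M := by
        field_simp
        linear_combination s * hMdef
      linarith
    have hgoal : K / (2 * M ^ 4) * s ^ 4 ≤ (1 / 2) * (s * K / M) := by
      have hs4 : s ^ 4 ≤ s := by
        calc s ^ 4 ≤ s ^ 1 := pow_le_pow_of_le_one hs0 hs1 (by norm_num)
          _ = s := pow_one s
      have hMM : M ≤ M ^ 4 := by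
        calc M = M ^ 1 := (pow_one M).symm
          _ ≤ M ^ 4 := pow_le_pow_right₀ hM1 (by norm_num)
      have hden : (0:ℝ) < 2 * M ^ 4 := by
        have : (0:ℝ) < M ^ 4 := pow_pos hM0 4
        linarith
      have hcoef : (0:ℝ) ≤ K / (2 * M ^ 4) := le_of_lt (div_pos hKpos hden)
      calc K / (2 * M ^ 4) * s ^ 4 ≤ K / (2 * M ^ 4) * s :=
            mul_le_mul_of_nonneg_left hs4 hcoef
        _ = (K * s) / (2 * M ^ 4) := by ring
        _ ≤ (K * s) / (2 * M) :=
            div_le_div_of_nonneg_left (mul_nonneg hKpos.le hs0) (by linarith) (by linarith)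
        _ = (1 / 2) * (s * K / M) := by ring
    have h4 : d * x - binEnt x + c * y - binEnt y ≤
        max (d * x - binEnt x + c * y - binEnt y) (l x y) := le_max_left _ _
    linarith
end
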